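/- Let G and S be symmetric positive definite l×l real matrices with Q := S⁻¹ − G⁻¹ positive definite, and let 1 ≤ r ≤ l. Define S̃ = Q^{1/2} S Q^{1/2}, G̃ = Q^{1/2} G Q^{1/2}, and let P be the orthogonal projection onto the span of the eigenvectors of S̃ corresponding to its r largest eigenvalues. Then tr(G̃ S̃⁻¹ P) = Σ_{i=1}^{r} λᵢ(G S⁻¹), where λᵢ denotes the i-th largest eigenvalue. -/

import Mathlib

/-!
Write `R = Q^{1/2}` and `S̃ = R S R`. Substituting `R R = S⁻¹ - G⁻¹` gives
`S̃ · (R G S⁻¹ R⁻¹) = R G S⁻¹ R⁻¹ - 1`, so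
`G̃ S̃⁻¹ = R G S⁻¹ R⁻¹ = (1 - S̃)⁻¹ = V diag(1/(1 - dᵢ)) Vᵀ`.
The trace against `P = V diag(1_{i<r}) Vᵀ` is then `Σ_{i<r} 1/(1 - dᵢ)`. On the other hand
`G̃ S̃⁻¹` is similar to `G S⁻¹`, hence has the same characteristic polynomial as
`S^{-1/2} G S^{-1/2} ≻ 0`; so the `1/(1 - dᵢ)` are its eigenvalues, they are positive, and
positivity makes them nonincreasing in `i` because `d` is. They are therefore the
eigenvalues of `S^{-1/2} G S^{-1/2}` listed in decreasing order.
-/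

open Matrix

/-- The `i`-th largest value of `f` (descending sort). -/
noncomputable def sortedDesc {n : ℕ} (f : Fin n → ℝ) : Fin n → ℝ :=
  fun i => f (Tuple.sort f i.rev)

section SqrtDef

open scoped ComplexOrder

/-- The positive semidefinite square root of a positive semidefinite matrix
(the definition removed from Mathlib, restored with its old meaning). -/
noncomputable def Matrix.PosSemidef.sqrt {n : Type*} [Fintype n] [DecidableEq n]
    {𝕜 : Type*} [RCLike 𝕜] {A : Matrix n n 𝕜} (hA : A.PosSemidef) : Matrix n n 𝕜 :=
  hA.1.eigenvectorUnitary.1 * diagonal ((↑) ∘ (Real.sqrt ∘ hA.1.eigenvalues)) *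
  (star hA.1.eigenvectorUnitary : Matrix n n 𝕜)

end SqrtDef

section Sqrt

open scoped MatrixOrder ComplexOrder

variable {n : Type*} [Fintype n] [DecidableEq n] {𝕜 : Type*} [RCLike 𝕜] {A : Matrix n n 𝕜}

theorem Matrix.PosSemidef.sqrt_eq_cfcSqrt (hA : A.PosSemidef) : hA.sqrt = CFC.sqrt A := by
  rw [CFC.sqrt_eq_real_sqrt A hA.nonneg, cfcₙ_eq_cfc, hA.1.cfc_eq]
  rfl

theorem Matrix.PosSemidef.sqrt_mul_self (hA : A.PosSemidef) : hA.sqrt * hA.sqrt = A := by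
  rw [hA.sqrt_eq_cfcSqrt, CFC.sqrt_mul_sqrt_self A hA.nonneg]

theorem Matrix.PosSemidef.isHermitian_sqrt (hA : A.PosSemidef) : hA.sqrt.IsHermitian := by
  rw [hA.sqrt_eq_cfcSqrt]
  exact (CFC.sqrt_nonneg A).posSemidef.isHermitian

theorem Matrix.PosDef.isUnit_det_sqrt (hA : A.PosDef) : IsUnit hA.posSemidef.sqrt.det := by
  have h := (A.isUnit_iff_isUnit_det).mp hA.isUnit
  rw [← hA.posSemidef.sqrt_mul_self, det_mul, IsUnit.mul_iff] at h
  exact h.1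

theorem Matrix.PosDef.sqrt_mul_mul_sqrt {B : Matrix n n 𝕜} (hB : B.PosDef) (hA : A.PosDef) :
    (hA.posSemidef.sqrt * B * hA.posSemidef.sqrt).PosDef := by
  have h := hB.conjTranspose_mul_mul_same <| mulVec_injective_iff_isUnit.mpr <|
    (isUnit_iff_isUnit_det _).mpr hA.isUnit_det_sqrt
  rwa [hA.posSemidef.isHermitian_sqrt.eq] at h

theorem Matrix.PosDef.pos_of_map_eigenvalues_eq (hA : A.PosDef) {g : n → ℝ}
    (h : Finset.univ.val.map hA.1.eigenvalues = Finset.univ.val.map g) (i : n) : 0 < g i := by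
  obtain ⟨j, -, hj⟩ :=
    Multiset.mem_map.mp (h ▸ Multiset.mem_map_of_mem g (Finset.mem_univ_val i))
  exact hj ▸ hA.eigenvalues_pos j

end Sqrt

section Conjugation

variable {n : Type*} [Fintype n] [DecidableEq n] {K : Type*} [CommRing K]

theorem Matrix.conj_mul_inv_conj {R S G : Matrix n n K} (hR : IsUnit R.det) :
    R * G * R * (R * S * R)⁻¹ = R * (G * S⁻¹) * R⁻¹ := by
  rw [mul_inv_rev, mul_inv_rev]
  simp only [Matrix.mul_assoc, mul_nonsing_inv_cancel_left _ _ hR]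

theorem Matrix.one_sub_conj_mul_conj_mul_inv_conj_eq_one {R S G : Matrix n n K}
    (hR : IsUnit R.det) (hS : IsUnit S.det) (hG : IsUnit G.det) (hRR : R * R = S⁻¹ - G⁻¹) :
    (1 - R * S * R) * (R * G * R * (R * S * R)⁻¹) = 1 := by
  rw [conj_mul_inv_conj hR]
  calc (1 - R * S * R) * (R * (G * S⁻¹) * R⁻¹)
      = R * (G * S⁻¹) * R⁻¹ - R * (S * (R * R) * G * S⁻¹) * R⁻¹ := by
        simp only [Matrix.sub_mul, Matrix.one_mul, Matrix.mul_assoc]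
    _ = R * (G * S⁻¹) * R⁻¹ - R * (G * S⁻¹ - 1) * R⁻¹ := by
        rw [hRR, Matrix.mul_sub, Matrix.sub_mul, Matrix.sub_mul, mul_nonsing_inv _ hS,
          Matrix.one_mul, Matrix.mul_assoc S, nonsing_inv_mul _ hG, Matrix.mul_one,
          mul_nonsing_inv _ hS]
    _ = 1 := by
        rw [Matrix.mul_sub, Matrix.sub_mul, sub_sub_cancel, Matrix.mul_one, mul_nonsing_inv _ hR]

theorem Matrix.charpoly_conj_of_mul_eq_one {A B : Matrix n n K} (hBA : B * A = 1)
    (M : Matrix n n K) : (A * M * B).charpoly = M.charpoly := by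
  rw [Matrix.mul_assoc, charpoly_mul_comm, Matrix.mul_assoc, hBA, Matrix.mul_one]

variable {V : Matrix n n K} (hV : Vᵀ * V = 1)
include hV

theorem Matrix.det_conj_diagonal (d : n → K) : (V * diagonal d * Vᵀ).det = ∏ i, d i := by
  rw [det_mul_comm, ← Matrix.mul_assoc, hV, Matrix.one_mul, det_diagonal]

theorem Matrix.one_sub_conj_diagonal (d : n → K) :
    1 - V * diagonal d * Vᵀ = V * diagonal (1 - d) * Vᵀ := by
  rw [show diagonal (1 - d) = 1 - diagonal d from (diagonal_sub 1 d).symm, Matrix.mul_sub,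
    Matrix.sub_mul, Matrix.mul_one, mul_eq_one_comm.mp hV]

theorem Matrix.trace_conj_mul_conj (A B : Matrix n n K) :
    (V * A * Vᵀ * (V * B * Vᵀ)).trace = (A * B).trace := by
  rw [show V * A * Vᵀ * (V * B * Vᵀ) = V * (A * (Vᵀ * V) * B) * Vᵀ by
      simp only [Matrix.mul_assoc],
    hV, Matrix.mul_one, trace_mul_cycle, hV, Matrix.one_mul]

end Conjugation

theorem Matrix.inv_conj_diagonal {n : Type*} [Fintype n] [DecidableEq n] {K : Type*} [Field K]
    {V : Matrix n n K} (hV : Vᵀ * V = 1) {d : n → K} (hd : IsUnit (V * diagonal d * Vᵀ).det) :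
    (V * diagonal d * Vᵀ)⁻¹ = V * diagonal d⁻¹ * Vᵀ := by
  rw [det_conj_diagonal hV, isUnit_iff_ne_zero, Finset.prod_ne_zero_iff] at hd
  refine inv_eq_right_inv ?_
  rw [show V * diagonal d * Vᵀ * (V * diagonal d⁻¹ * Vᵀ)
      = V * (diagonal d * (Vᵀ * V) * diagonal d⁻¹) * Vᵀ by simp only [Matrix.mul_assoc],
    hV, Matrix.mul_one, diagonal_mul_diagonal]
  simp [mul_inv_cancel₀ (hd _ (Finset.mem_univ _)), mul_eq_one_comm.mp hV]

theorem Matrix.IsHermitian.map_eigenvalues_eq_of_charpoly_eq {n : Type*} [Fintype n]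
    [DecidableEq n] {A : Matrix n n ℝ} (hA : A.IsHermitian) {g : n → ℝ}
    (h : A.charpoly = (diagonal g).charpoly) :
    Finset.univ.val.map hA.eigenvalues = Finset.univ.val.map g := by
  have := hA.roots_charpoly_eq_eigenvalues
  rw [h, charpoly_diagonal, Polynomial.roots_prod _ _
    (by simp [Finset.prod_ne_zero_iff, Polynomial.X_sub_C_ne_zero])] at this
  simpa using this.symm

theorem sortedDesc_eq_of_map_eq {l : ℕ} {a g : Fin l → ℝ} (hg : Antitone g)
    (h : Finset.univ.val.map a = Finset.univ.val.map g) : sortedDesc a = g := by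
  have hperm : (List.ofFn (a ∘ Tuple.sort a)).Perm (List.ofFn (g ∘ Fin.revPerm)) := by
    refine ((Tuple.sort a).ofFn_comp_perm a).trans
      (List.Perm.trans ?_ (Fin.revPerm.ofFn_comp_perm g).symm)
    rw [← Multiset.coe_eq_coe, ← Fin.univ_val_map, ← Fin.univ_val_map, h]
  have hsorted : a ∘ Tuple.sort a = g ∘ Fin.revPerm :=
    List.ofFn_injective <| hperm.eq_of_sortedLE (Tuple.monotone_sort a).sortedLE_ofFn
      (hg.comp Fin.rev_anti).sortedLE_ofFn
  funext i
  simpa [sortedDesc] using congrFun hsorted i.rev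

theorem stmt_9_general {l : ℕ} (G S : Matrix (Fin l) (Fin l) ℝ) (hG : G.PosDef) (hS : S.PosDef)
    (hQ : (S⁻¹ - G⁻¹).PosDef) (r : ℕ)
    (V : Matrix (Fin l) (Fin l) ℝ) (d : Fin l → ℝ)
    (hV : Vᵀ * V = 1) (hd : Antitone d)
    (hSdec : hQ.posSemidef.sqrt * S * hQ.posSemidef.sqrt = V * diagonal d * Vᵀ) :
    ∀ hM : (hS.inv.posSemidef.sqrt * G * hS.inv.posSemidef.sqrt).IsHermitian,
      (hQ.posSemidef.sqrt * G * hQ.posSemidef.sqrt *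
        (hQ.posSemidef.sqrt * S * hQ.posSemidef.sqrt)⁻¹ *
        (V * diagonal (fun i : Fin l => if (i : ℕ) < r then (1 : ℝ) else 0) * Vᵀ)).trace =
      ∑ i ∈ Finset.univ.filter (fun i : Fin l => (i : ℕ) < r), sortedDesc hM.eigenvalues i := by
  intro hM
  set R := hQ.posSemidef.sqrt
  set T := hS.inv.posSemidef.sqrt
  have hR : IsUnit R.det := hQ.isUnit_det_sqrt
  have hinv := one_sub_conj_mul_conj_mul_inv_conj_eq_one hR
    ((S.isUnit_iff_isUnit_det).mp hS.isUnit) ((G.isUnit_iff_isUnit_det).mp hG.isUnit)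
    hQ.posSemidef.sqrt_mul_self
  have hN : R * G * R * (R * S * R)⁻¹ = V * diagonal (1 - d)⁻¹ * Vᵀ := by
    rw [← inv_eq_right_inv hinv, hSdec, one_sub_conj_diagonal hV]
    refine inv_conj_diagonal hV ?_
    rw [← one_sub_conj_diagonal hV, ← hSdec]
    exact isUnit_det_of_right_inverse hinv
  have hchar : (T * G * T).charpoly = (diagonal (1 - d)⁻¹).charpoly := calc
    (T * G * T).charpoly = (G * S⁻¹).charpoly := by
      rw [Matrix.mul_assoc, charpoly_mul_comm, Matrix.mul_assoc, hS.inv.posSemidef.sqrt_mul_self]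
    _ = (R * (G * S⁻¹) * R⁻¹).charpoly :=
      (charpoly_conj_of_mul_eq_one (nonsing_inv_mul R hR) _).symm
    _ = (V * diagonal (1 - d)⁻¹ * Vᵀ).charpoly := by rw [← conj_mul_inv_conj hR, hN]
    _ = (diagonal (1 - d)⁻¹).charpoly := charpoly_conj_of_mul_eq_one hV _
  have hspec := hM.map_eigenvalues_eq_of_charpoly_eq hchar
  have hpos := (hG.sqrt_mul_mul_sqrt hS.inv).pos_of_map_eigenvalues_eq hspec
  have hanti : Antitone (1 - d)⁻¹ := fun i j hij =>
    inv_anti₀ (inv_pos.mp (hpos i)) (sub_le_sub_left (hd hij) 1)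
  rw [hN, trace_conj_mul_conj hV, diagonal_mul_diagonal, trace_diagonal,
    sortedDesc_eq_of_map_eq hanti hspec, Finset.sum_filter]
  simp

/-- With `Q = S⁻¹ − G⁻¹ ≻ 0`, `S̃ = Q^{1/2} S Q^{1/2}`, `G̃ = Q^{1/2} G Q^{1/2}` and `P`
the orthogonal projection onto the top-`r` eigenspace of `S̃` (given via a spectral
decomposition `S̃ = V Λ Vᵀ` with nonincreasing eigenvalues), one has
`tr(G̃ S̃⁻¹ P) = Σ_{i=1}^{r} λᵢ(G S⁻¹)` where `λᵢ(G S⁻¹)` are the ordered eigenvalues of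
`G S⁻¹` (equivalently of the similar symmetric matrix `S^{-1/2} G S^{-1/2}`). -/
theorem stmt_9 {l : ℕ} (G S : Matrix (Fin l) (Fin l) ℝ) (hG : G.PosDef) (hS : S.PosDef)
    (hQ : (S⁻¹ - G⁻¹).PosDef) (r : ℕ) (hr1 : 1 ≤ r) (hrl : r ≤ l)
    (V : Matrix (Fin l) (Fin l) ℝ) (d : Fin l → ℝ)
    (hV : Vᵀ * V = 1) (hd : Antitone d)
    (hSdec : hQ.posSemidef.sqrt * S * hQ.posSemidef.sqrt = V * diagonal d * Vᵀ) :
    ∀ hM : (hS.inv.posSemidef.sqrt * G * hS.inv.posSemidef.sqrt).IsHermitian,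
      (hQ.posSemidef.sqrt * G * hQ.posSemidef.sqrt *
        (hQ.posSemidef.sqrt * S * hQ.posSemidef.sqrt)⁻¹ *
        (V * diagonal (fun i : Fin l => if (i : ℕ) < r then (1 : ℝ) else 0) * Vᵀ)).trace =
      ∑ i ∈ Finset.univ.filter (fun i : Fin l => (i : ℕ) < r), sortedDesc hM.eigenvalues i :=
  stmt_9_general G S hG hS hQ r V d hV hd hSdec
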